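/- arXiv:2605.28614 — 2 statements merged into one kernel-verified Lean document; each statement's English description precedes it below -/
import Mathlib

section
/- Let P, Q, R be integers with gcd(P,Q,R)=1 and R ≥ 1. Let S = gcd(Q,R) and choose integers b0, c0 with b0·Q + c0·R = S. Then the set of integer triples (a,b,c) with a ≥ 1, gcd(a,b,c)=1, and aP = bQ + cR equals the set of triples (nS, nPb0 + mR/S, nPc0 − mQ/S) where n ≥ 1 and m is an integer with gcd(m,n)=1. -/
/-!
Write `Q = Sq`, `R = Sr`, so that `b₀q + c₀r = 1`. Since `gcd(P, S) = 1`, every solution has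
`S ∣ a`, say `a = nS`, and then `m = c₀b - b₀c` recovers `b` and `c` from `(n, m)`. The pair
`(b, c)` is the image of `(nP, m)` under an integer matrix of determinant `-1`, so
`gcd(b, c) = gcd(nP, m)`, and therefore `gcd(a, b, c) = gcd(n·gcd(S, P), m) = gcd(m, n)`.
-/

namespace Int

theorem gcd_eq_gcd_of_forall_dvd_iff {x y x' y' : ℤ}
    (h : ∀ d : ℤ, d ∣ x ∧ d ∣ y ↔ d ∣ x' ∧ d ∣ y') : x.gcd y = x'.gcd y' := by
  apply Nat.dvd_antisymm
  · obtain ⟨hx', hy'⟩ := (h _).mp ⟨gcd_dvd_left x y, gcd_dvd_right x y⟩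
    exact natCast_dvd_natCast.mp (dvd_coe_gcd hx' hy')
  · obtain ⟨hx, hy⟩ := (h _).mpr ⟨gcd_dvd_left x' y', gcd_dvd_right x' y'⟩
    exact natCast_dvd_natCast.mp (dvd_coe_gcd hx hy)

theorem gcd_mul_add_mul_mul_sub_mul {b₀ c₀ q r : ℤ} (hbez : b₀ * q + c₀ * r = 1) (u v : ℤ) :
    (u * b₀ + v * r).gcd (u * c₀ - v * q) = u.gcd v := by
  refine gcd_eq_gcd_of_forall_dvd_iff fun d ↦ ⟨fun ⟨hb, hc⟩ ↦ ⟨?_, ?_⟩, fun ⟨hu, hv⟩ ↦ ⟨?_, ?_⟩⟩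
  · have hu : u = q * (u * b₀ + v * r) + r * (u * c₀ - v * q) := by
      linear_combination -u * hbez
    exact hu ▸ (hb.mul_left q).add (hc.mul_left r)
  · have hv : v = c₀ * (u * b₀ + v * r) - b₀ * (u * c₀ - v * q) := by
      linear_combination -v * hbez
    exact hv ▸ (hb.mul_left c₀).sub (hc.mul_left b₀)
  · exact (hu.mul_right b₀).add (hv.mul_right r)
  · exact (hu.mul_right c₀).sub (hv.mul_right q)

variable {P S q r b₀ c₀ : ℤ}

theorem exists_eq_of_mul_eq_mul_add_mul (hS : S ≠ 0) (hPS : IsCoprime S P)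
    (hbez : b₀ * q + c₀ * r = 1) {a b c : ℤ} (h : a * P = b * (S * q) + c * (S * r)) :
    ∃ n m : ℤ, a = n * S ∧ b = n * P * b₀ + m * r ∧ c = n * P * c₀ - m * q := by
  obtain ⟨n, rfl⟩ : S ∣ a := hPS.dvd_of_dvd_mul_right ⟨b * q + c * r, by linear_combination h⟩
  have hnP : n * P = b * q + c * r :=
    mul_left_cancel₀ hS (by linear_combination h)
  refine ⟨n, c₀ * b - b₀ * c, mul_comm S n, ?_, ?_⟩
  · linear_combination -b₀ * hnP - b * hbez
  · linear_combination -c₀ * hnP - c * hbez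

theorem gcd_mul_gcd_mul_add_mul_mul_sub_mul (hPS : IsCoprime S P)
    (hbez : b₀ * q + c₀ * r = 1) (n m : ℤ) :
    (n * S).gcd ((n * P * b₀ + m * r).gcd (n * P * c₀ - m * q)) = m.gcd n := by
  rw [gcd_mul_add_mul_mul_sub_mul hbez, ← gcd_assoc, gcd_mul_left, gcd_comm S,
    isCoprime_iff_gcd_eq_one.mp hPS.symm, mul_one, gcd_comm m]
  simp [gcd_eq_natAbs, natAbs_abs]

end Int

/-- For integers `P, Q, R` with `gcd(P,Q,R)=1`, `R ≥ 1`, `S = gcd(Q,R)` and Bézout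
coefficients `b₀Q + c₀R = S`, the primitive triples `(a,b,c)` with `a ≥ 1` and
`aP = bQ + cR` are exactly the triples `(nS, nPb₀ + mR/S, nPc₀ - mQ/S)` with
`n ≥ 1`, `gcd(m,n)=1`. -/
theorem primitive_solutions_aP_eq_bQ_plus_cR
    (P Q R : ℤ) (hPQR : Int.gcd P (Int.gcd Q R) = 1) (hR : 1 ≤ R)
    (S b₀ c₀ : ℤ) (hS : S = Int.gcd Q R) (hBezout : b₀ * Q + c₀ * R = S) :
    {t : ℤ × ℤ × ℤ | 1 ≤ t.1 ∧ Int.gcd t.1 (Int.gcd t.2.1 t.2.2) = 1 ∧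
        t.1 * P = t.2.1 * Q + t.2.2 * R} =
      {t : ℤ × ℤ × ℤ | ∃ n m : ℤ, 1 ≤ n ∧ Int.gcd m n = 1 ∧
        t = (n * S, n * P * b₀ + m * (R / S), n * P * c₀ - m * (Q / S))} := by
  have hS0 : 0 < S := hS ▸ Int.natCast_pos.mpr (Int.gcd_pos_of_ne_zero_right Q (by omega))
  have hPS : IsCoprime S P := Int.isCoprime_iff_gcd_eq_one.mpr (Int.gcd_comm S P ▸ hS ▸ hPQR)
  obtain ⟨q, rfl⟩ : S ∣ Q := hS ▸ Int.gcd_dvd_left Q R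
  obtain ⟨r, rfl⟩ : S ∣ R := hS ▸ Int.gcd_dvd_right _ R
  have hbez : b₀ * q + c₀ * r = 1 :=
    mul_left_cancel₀ hS0.ne' (by linear_combination hBezout)
  simp only [Int.mul_ediv_cancel_left _ hS0.ne']
  ext ⟨a, b, c⟩
  constructor
  · rintro ⟨ha, hgcd, h⟩
    obtain ⟨n, m, rfl, rfl, rfl⟩ := Int.exists_eq_of_mul_eq_mul_add_mul hS0.ne' hPS hbez h
    refine ⟨n, m, by nlinarith, ?_, rfl⟩
    rwa [← Int.gcd_mul_gcd_mul_add_mul_mul_sub_mul hPS hbez]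
  · rintro ⟨n, m, hn, hmn, ⟨⟩⟩
    refine ⟨by nlinarith, by rwa [Int.gcd_mul_gcd_mul_add_mul_mul_sub_mul hPS hbez], ?_⟩
    linear_combination -(n * S * P) * hbez
end

section
/- Fix real numbers A > 0 and B, C with B^2 − 4AC = 0, and fix a closed interval [X,Y] with X > −B/(2A). Then for every ε > 0, as Δ → ∞, the number of pairs (m,n) with n ≥ 1, gcd(m,n)=1, X ≤ m/n ≤ Y, and 0 < A·m^2 + B·m·n + C·n^2 ≤ Δ equals (3Δ/π^2)·( −2/(2A·Y + B) + 2/(2A·X + B) ) + O(Δ^{1/2+ε}). -/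
open ArithmeticFunction Real Finset

lemma hasSum_moebius_div_sq :
    HasSum (fun n : ℕ => (moebius n : ℝ)/(n:ℝ)^2) (6/π^2) := by
  have hs : LSeriesSummable (fun n => (moebius n : ℂ)) 2 :=
    LSeriesSummable_moebius_iff.mpr (by norm_num)
  have h1 := hs.LSeriesHasSum
  have hmul := LSeries_zeta_mul_Lseries_moebius (s := 2) (by norm_num)
  rw [LSeries_zeta_eq_riemannZeta (by norm_num), riemannZeta_two] at hmul
  have hπ : (π:ℂ) ≠ 0 := by exact_mod_cast Real.pi_ne_zero
  have hval : LSeries (fun n => (moebius n : ℂ)) 2 = ((6/π^2 : ℝ) : ℂ) := by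
    push_cast
    field_simp at hmul ⊢
    linear_combination hmul
  rw [hval] at h1
  have h2 : HasSum (fun n : ℕ => LSeries.term (fun n => (moebius n : ℂ)) 2 n)
      (((6/π^2 : ℝ) : ℂ)) := h1
  have hterm : ∀ n : ℕ, LSeries.term (fun n => (moebius n : ℂ)) 2 n
      = (((moebius n : ℝ)/(n:ℝ)^2 : ℝ) : ℂ) := by
    intro n
    rcases eq_or_ne n 0 with rfl | hn
    · simp [LSeries.term]
    · rw [LSeries.term_of_ne_zero hn]
      push_cast
      rw [Complex.cpow_ofNat]
  simp only [hterm] at h2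
  exact Complex.hasSum_ofReal.mp h2


lemma summable_shift_inv_sq (D : ℕ) :
    Summable (fun i : ℕ => ((i + (D+1) : ℝ)^2)⁻¹) := by
  have := (Real.summable_one_div_nat_pow (p := 2)).mpr (by norm_num)
  simp only [one_div] at this
  have h2 := this.comp_injective (add_left_injective (D+1))
  refine h2.congr fun i => ?_
  simp only [Function.comp]
  push_cast
  ring_nf

lemma tail_inv_sq (D : ℕ) (hD : 1 ≤ D) :
    ∑' i : ℕ, ((i + (D+1) : ℝ)^2)⁻¹ ≤ (1:ℝ)/D := by
  apply (summable_shift_inv_sq D).tsum_le_of_sum_le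
  intro s
  obtain ⟨N, hN⟩ := s.exists_nat_subset_range
  calc ∑ i ∈ s, ((i + (D+1) : ℝ)^2)⁻¹
      ≤ ∑ i ∈ Finset.range N, ((i + (D+1) : ℝ)^2)⁻¹ := by
        apply Finset.sum_le_sum_of_subset_of_nonneg hN
        intro i _ _; positivity
    _ = ∑ d ∈ Finset.Ico (D+1) (D+1+N), ((d:ℝ)^2)⁻¹ := by
        rw [Finset.sum_Ico_eq_sum_range]
        simp only [Nat.add_sub_cancel_left]
        apply Finset.sum_congr rfl
        intro i _
        push_cast; ring_nf
    _ ≤ (D:ℝ)⁻¹ - (max (D+N) D : ℝ)⁻¹ := by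
        have hsub : Finset.Ico (D+1) (D+1+N) ⊆ Finset.Ioc D (max (D+N) D) := by
          intro x hx
          simp only [Finset.mem_Ico, Finset.mem_Ioc] at *
          omega
        refine le_trans (Finset.sum_le_sum_of_subset_of_nonneg hsub ?_) ?_
        · intro i _ _; positivity
        · exact_mod_cast sum_Ioc_inv_sq_le_sub (α := ℝ)
            (Nat.one_le_iff_ne_zero.mp hD) (le_max_right _ _)
    _ ≤ (1:ℝ)/D := by
        rw [one_div]
        have : (0:ℝ) ≤ (max (D+N) D : ℝ)⁻¹ := by positivity
        linarith

lemma moebius_partial (D : ℕ) (hD : 1 ≤ D) :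
    |(∑ d ∈ Finset.Icc 1 D, (moebius d : ℝ)/(d:ℝ)^2) - 6/π^2| ≤ (1:ℝ)/D := by
  set f : ℕ → ℝ := fun n => (moebius n : ℝ)/(n:ℝ)^2 with hf
  have hsum := hasSum_moebius_div_sq
  have hsummable : Summable f := hsum.summable
  have htsum : ∑' n, f n = 6/π^2 := hsum.tsum_eq
  have hsplit := hsummable.sum_add_tsum_nat_add (D+1)
  have hIcc : ∑ d ∈ Finset.range (D+1), f d = ∑ d ∈ Finset.Icc 1 D, f d := by
    rw [Finset.range_eq_Ico, Finset.sum_eq_sum_Ico_succ_bot (by omega), ← Finset.Ico_add_one_right_eq_Icc]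
    simp [hf]
  rw [← hIcc]
  have heq : (∑ d ∈ Finset.range (D+1), f d) - 6/π^2 = -(∑' i, f (i + (D+1))) := by
    rw [← htsum, ← hsplit]; ring
  rw [heq, abs_neg]
  calc |∑' i, f (i + (D+1))|
      ≤ ∑' i : ℕ, ((i + (D+1) : ℝ)^2)⁻¹ := by
        have hsummable2 : Summable (fun i => f (i + (D+1))) :=
          (summable_nat_add_iff (D+1)).mpr hsummable
        have habs : Summable (fun i => |f (i + (D+1))|) := by
          simpa [Real.norm_eq_abs] using hsummable2.norm
        have h0 : |∑' i, f (i + (D+1))| ≤ ∑' i, |f (i + (D+1))| := by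
          simpa [Real.norm_eq_abs] using norm_tsum_le_tsum_norm
            (f := fun i => f (i + (D+1))) (by simpa [Real.norm_eq_abs] using hsummable2.norm)
        refine h0.trans ?_
        apply Summable.tsum_le_tsum _ habs (summable_shift_inv_sq D)
        intro i
        have h1 : |(moebius (i+(D+1)) : ℝ)| ≤ 1 := by
          exact_mod_cast abs_moebius_le_one (n := i+(D+1))
        have h2 : |f (i+(D+1))| ≤ 1 / (((i+(D+1):ℕ)):ℝ)^2 := by
          rw [hf]
          simp only []
          rw [abs_div, abs_of_nonneg (a := (((i+(D+1):ℕ)):ℝ)^2) (by positivity)]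
          gcongr
        refine h2.trans (le_of_eq ?_)
        rw [one_div]
        push_cast
        ring_nf
    _ ≤ (1:ℝ)/D := tail_inv_sq D hD


noncomputable def eqRow (A B X Y L : ℝ) (n : ℤ) : Finset ℤ :=
  Finset.Icc ⌈X*(n:ℝ)⌉ ⌊min (Y*(n:ℝ)) ((L - B*(n:ℝ))/(2*A))⌋

noncomputable def eqReg (A B X Y L : ℝ) : Finset (ℤ×ℤ) :=
  (Finset.Icc (1:ℤ) ⌊L/(2*A*X+B)⌋).biUnion
    (fun n => (eqRow A B X Y L n).map ⟨fun m => (m,n), fun a b h => by simpa using h⟩)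

def eqP (A B X Y L : ℝ) (p : ℤ×ℤ) : Prop :=
  1 ≤ p.2 ∧ X*(p.2:ℝ) ≤ (p.1:ℝ) ∧ (p.1:ℝ) ≤ Y*(p.2:ℝ) ∧ 2*A*(p.1:ℝ) + B*(p.2:ℝ) ≤ L

noncomputable def eqCop (A B X Y L : ℝ) : Finset (ℤ×ℤ) :=
  (eqReg A B X Y L).filter (fun p => Int.gcd p.1 p.2 = 1)

lemma mem_eqReg {A B X Y L : ℝ} (hA : 0 < A) (hκ : 0 < 2*A*X+B) {p : ℤ×ℤ} :
    p ∈ eqReg A B X Y L ↔ eqP A B X Y L p := by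
  obtain ⟨m, n⟩ := p
  simp only [eqReg, Finset.mem_biUnion, Finset.mem_map, Finset.mem_Icc, eqRow,
    Function.Embedding.coeFn_mk, Prod.mk.injEq, eqP]
  constructor
  · rintro ⟨n', ⟨hn1, hn2⟩, m', hm', rfl, rfl⟩
    rw [Int.ceil_le, Int.le_floor, le_inf_iff] at hm'
    obtain ⟨h1, h2, h3⟩ : _ ∧ _ ∧ _ := ⟨hm'.1, hm'.2.1, hm'.2.2⟩
    refine ⟨hn1, h1, h2, ?_⟩
    rw [le_div_iff₀ (by positivity)] at h3
    nlinarith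
  · rintro ⟨hn1, h1, h2, h3⟩
    refine ⟨n, ⟨hn1, ?_⟩, m, ?_, rfl⟩
    · rw [Int.le_floor, le_div_iff₀ hκ]
      have hn0 : (0:ℝ) ≤ (n:ℝ) := by exact_mod_cast hn1.trans' (by norm_num)
      nlinarith
    · rw [Int.ceil_le, Int.le_floor, le_inf_iff]
      refine ⟨h1, h2, ?_⟩
      rw [le_div_iff₀ (by positivity)]
      nlinarith

lemma card_eqReg (A B X Y L : ℝ) :
    (eqReg A B X Y L).card
      = ∑ n ∈ Finset.Icc (1:ℤ) ⌊L/(2*A*X+B)⌋, (eqRow A B X Y L n).card := by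
  rw [eqReg, Finset.card_biUnion]
  · simp [Finset.card_map]
  · intro x _ y _ hxy
    simp only [Function.onFun, Finset.disjoint_left]
    rintro a ha hb
    simp only [Finset.mem_map, Function.Embedding.coeFn_mk] at ha hb
    obtain ⟨m1, _, rfl⟩ := ha
    obtain ⟨m2, _, h⟩ := hb
    have h2 := congrArg Prod.snd h
    exact hxy h2.symm


noncomputable def rowlen (A B X Y L : ℝ) (n : ℤ) : ℝ :=
  min (Y*(n:ℝ)) ((L - B*(n:ℝ))/(2*A)) - X*(n:ℝ)

lemma gaussIocNat (K : ℕ) :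
    ∑ n ∈ Finset.Ioc (0:ℤ) (K:ℤ), (n:ℝ) = (K:ℝ)*((K:ℝ)+1)/2 := by
  induction K with
  | zero => simp
  | succ k ih =>
    have hins : Finset.Ioc (0:ℤ) ((k+1:ℕ):ℤ) = insert ((k:ℤ)+1) (Finset.Ioc 0 (k:ℤ)) := by
      ext x; simp only [Finset.mem_Ioc, Finset.mem_insert]; push_cast; omega
    rw [hins, Finset.sum_insert (by simp), ih]
    push_cast; ring

lemma gaussIoc (M : ℤ) (hM : 0 ≤ M) :
    ∑ n ∈ Finset.Ioc (0:ℤ) M, (n:ℝ) = M*(M+1)/2 := by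
  obtain ⟨K, rfl⟩ := Int.eq_ofNat_of_zero_le hM
  have := gaussIocNat K
  push_cast at this ⊢
  exact this

lemma sum_Ioc_consec_int (f : ℤ → ℝ) {a b c : ℤ} (h1 : a ≤ b) (h2 : b ≤ c) :
    ∑ i ∈ Finset.Ioc a b, f i + ∑ i ∈ Finset.Ioc b c, f i = ∑ i ∈ Finset.Ioc a c, f i := by
  rw [← Finset.Ioc_union_Ioc_eq_Ioc h1 h2, Finset.sum_union]
  refine Finset.disjoint_left.2 fun x hx h'x => ?_
  rw [Finset.mem_Ioc] at hx h'x
  omega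

lemma rowcard_est {A B X Y L : ℝ} (hA : 0 < A) (hκ : 0 < 2*A*X+B) (hXY : X ≤ Y)
    {n : ℤ} (hn : n ∈ Finset.Icc (1:ℤ) ⌊L/(2*A*X+B)⌋) :
    |((eqRow A B X Y L n).card : ℝ) - rowlen A B X Y L n| ≤ 1 := by
  rw [Finset.mem_Icc] at hn
  have hn0 : (0:ℝ) < (n:ℝ) := by exact_mod_cast hn.1.trans_lt' (by norm_num)
  have hnL : (n:ℝ) * (2*A*X+B) ≤ L := by
    have := Int.le_floor.mp hn.2
    rw [le_div_iff₀ hκ] at this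
    exact this
  set a : ℝ := X*(n:ℝ) with ha
  set b : ℝ := min (Y*(n:ℝ)) ((L - B*(n:ℝ))/(2*A)) with hb
  have hab : a ≤ b := by
    rw [hb, le_inf_iff]
    constructor
    · exact mul_le_mul_of_nonneg_right hXY hn0.le
    · rw [le_div_iff₀ (by positivity)]; nlinarith
  have hcard : (eqRow A B X Y L n).card = (⌊b⌋ + 1 - ⌈a⌉).toNat := by
    rw [eqRow, Int.card_Icc]
  have hle : ⌈a⌉ ≤ ⌊b⌋ + 1 := (Int.ceil_le_ceil hab).trans (Int.ceil_le_floor_add_one b)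
  have hcard2 : ((eqRow A B X Y L n).card : ℝ) = (⌊b⌋:ℝ) + 1 - ⌈a⌉ := by
    rw [hcard]
    have h0 : (0:ℤ) ≤ ⌊b⌋ + 1 - ⌈a⌉ := by omega
    have h5 : ((⌊b⌋ + 1 - ⌈a⌉).toNat : ℤ) = ⌊b⌋ + 1 - ⌈a⌉ := Int.toNat_of_nonneg h0
    have h6 := congrArg (fun z : ℤ => (z:ℝ)) h5
    push_cast at h6 ⊢
    linarith
  have h1 := Int.floor_le b
  have h2 := Int.lt_floor_add_one b
  have h3 := Int.le_ceil a
  have h4 := Int.ceil_lt_add_one a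
  have hrl : rowlen A B X Y L n = b - a := rfl
  rw [hcard2, hrl, abs_le]
  constructor <;> linarith

set_option maxHeartbeats 1000000 in
lemma sum_rowlen_est {A B X Y L : ℝ} (hA : 0 < A) (hκ : 0 < 2*A*X+B) (hXY : X ≤ Y)
    (hL : 0 ≤ L) :
    |(∑ n ∈ Finset.Icc (1:ℤ) ⌊L/(2*A*X+B)⌋, rowlen A B X Y L n)
      - (1/(4*A))*(1/(2*A*X+B) - 1/(2*A*Y+B))*L^2|
      ≤ ((2*A*X+B) + (2*A*Y+B))/(4*A) + 1 := by
  set κ : ℝ := 2*A*X+B with hκdef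
  set lam : ℝ := 2*A*Y+B with hlamdef
  have hlam : 0 < lam := by rw [hlamdef]; nlinarith
  have hκlam : κ ≤ lam := by rw [hκdef, hlamdef]; nlinarith
  set M₁ : ℤ := ⌊L/lam⌋ with hM₁
  set M₂ : ℤ := ⌊L/κ⌋ with hM₂
  have hM₁0 : 0 ≤ M₁ := Int.floor_nonneg.mpr (by positivity)
  have hM₁₂ : M₁ ≤ M₂ := Int.floor_le_floor (by
    apply div_le_div_of_nonneg_left hL hκ hκlam)
  have hIcc : Finset.Icc (1:ℤ) M₂ = Finset.Ioc 0 M₂ := by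
    ext x; simp only [Finset.mem_Icc, Finset.mem_Ioc]; omega
  have hsplit : ∑ n ∈ Finset.Ioc (0:ℤ) M₁, rowlen A B X Y L n
      + ∑ n ∈ Finset.Ioc M₁ M₂, rowlen A B X Y L n
      = ∑ n ∈ Finset.Ioc (0:ℤ) M₂, rowlen A B X Y L n := by
    exact sum_Ioc_consec_int (fun n => rowlen A B X Y L n) hM₁0 hM₁₂
  -- first piece
  have hpiece1 : ∑ n ∈ Finset.Ioc (0:ℤ) M₁, rowlen A B X Y L n
      = (Y - X) * (M₁*(M₁+1)/2) := by
    rw [← gaussIoc M₁ hM₁0, Finset.mul_sum]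
    apply Finset.sum_congr rfl
    intro n hn
    rw [Finset.mem_Ioc] at hn
    have hn0 : (0:ℝ) < (n:ℝ) := by exact_mod_cast hn.1
    have hnM : (n:ℝ) ≤ L/lam := le_trans (by exact_mod_cast hn.2) (Int.floor_le _)
    have hmin : Y*(n:ℝ) ≤ (L - B*(n:ℝ))/(2*A) := by
      rw [le_div_iff₀ (by positivity)]
      have h' : (n:ℝ) * lam ≤ L := (le_div_iff₀ hlam).mp hnM
      rw [hlamdef] at h'
      nlinarith
    rw [rowlen, min_eq_left hmin]
    ring
  -- second piece
  have hcard2 : ((Finset.Ioc M₁ M₂).card : ℝ) = (M₂:ℝ) - M₁ := by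
    rw [Int.card_Ioc]
    have h5 : ((M₂ - M₁).toNat : ℤ) = M₂ - M₁ := Int.toNat_of_nonneg (by omega)
    have h6 := congrArg (fun z : ℤ => (z:ℝ)) h5
    push_cast at h6 ⊢
    linarith
  have hgauss2 : ∑ n ∈ Finset.Ioc M₁ M₂, (n:ℝ)
      = (M₂:ℝ)*(M₂+1)/2 - (M₁:ℝ)*(M₁+1)/2 := by
    have : ∑ n ∈ Finset.Ioc (0:ℤ) M₁, (n:ℝ) + ∑ n ∈ Finset.Ioc M₁ M₂, (n:ℝ)
        = ∑ n ∈ Finset.Ioc (0:ℤ) M₂, (n:ℝ) := by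
      exact sum_Ioc_consec_int (fun n : ℤ => (n:ℝ)) hM₁0 hM₁₂
    rw [gaussIoc M₁ hM₁0] at this
    rw [gaussIoc M₂ (hM₁0.trans hM₁₂)] at this
    linarith
  have hpiece2 : ∑ n ∈ Finset.Ioc M₁ M₂, rowlen A B X Y L n
      = (L * ((M₂:ℝ) - M₁) - κ * ((M₂:ℝ)*(M₂+1)/2 - (M₁:ℝ)*(M₁+1)/2))/(2*A) := by
    have hcong : ∀ n ∈ Finset.Ioc M₁ M₂, rowlen A B X Y L n = (L - κ*(n:ℝ))/(2*A) := by
      intro n hn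
      rw [Finset.mem_Ioc] at hn
      have hnM : (M₁:ℝ) + 1 ≤ (n:ℝ) := by exact_mod_cast hn.1
      have hfl : L/lam < (M₁:ℝ) + 1 := Int.lt_floor_add_one _
      have hlamn : L ≤ lam * (n:ℝ) := by
        rw [div_lt_iff₀ hlam] at hfl
        nlinarith
      have hmin : (L - B*(n:ℝ))/(2*A) ≤ Y*(n:ℝ) := by
        rw [div_le_iff₀ (by positivity)]
        rw [hlamdef] at hlamn
        nlinarith
      rw [rowlen, min_eq_right hmin, hκdef]
      field_simp
      ring
    rw [Finset.sum_congr rfl hcong, ← Finset.sum_div]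
    congr 1
    rw [Finset.sum_sub_distrib, Finset.sum_const, ← Finset.mul_sum, hgauss2,
      nsmul_eq_mul, hcard2]
    ring
  -- assemble
  set s : ℝ := L/lam - M₁ with hs
  set t : ℝ := L/κ - M₂ with ht
  have hs0 : 0 ≤ s := by
    have h := Int.floor_le (L/lam); rw [← hM₁] at h; rw [hs]; linarith
  have hs1 : s ≤ 1 := by
    have h := Int.lt_floor_add_one (L/lam); rw [← hM₁] at h; rw [hs]; linarith
  have ht0 : 0 ≤ t := by
    have h := Int.floor_le (L/κ); rw [← hM₂] at h; rw [ht]; linarith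
  have ht1 : t ≤ 1 := by
    have h := Int.lt_floor_add_one (L/κ); rw [← hM₂] at h; rw [ht]; linarith
  have hκ0 : κ ≠ 0 := ne_of_gt hκ
  have hlam0 : lam ≠ 0 := ne_of_gt hlam
  have hA0 : A ≠ 0 := ne_of_gt hA
  have hx : (M₁:ℝ) = L/lam - s := by rw [hs]; ring
  have hy : (M₂:ℝ) = L/κ - t := by rw [ht]; ring
  have hYX : Y - X = (lam - κ)/(2*A) := by
    rw [hκdef, hlamdef]; field_simp; ring
  rw [hIcc, ← hsplit, hpiece1, hpiece2]
  have key : (Y - X) * ((M₁:ℝ)*((M₁:ℝ)+1)/2)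
      + (L * ((M₂:ℝ) - (M₁:ℝ)) - κ * ((M₂:ℝ)*((M₂:ℝ)+1)/2 - (M₁:ℝ)*((M₁:ℝ)+1)/2))/(2*A)
      - (1/(4*A))*(1/κ - 1/lam)*L^2
      = (lam*(s^2 - s) - κ*(t^2 - t))/(4*A) := by
    rw [hx, hy, hYX]
    field_simp
    ring
  have habs : |(lam*(s^2 - s) - κ*(t^2 - t))/(4*A)| ≤ (κ + lam)/(4*A) + 1 := by
    rw [abs_div, abs_of_pos (by positivity : (0:ℝ) < 4*A)]
    have h1 : |lam*(s^2 - s) - κ*(t^2 - t)| ≤ lam + κ := by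
      rw [abs_le]
      constructor
      · nlinarith [mul_nonneg hlam.le (show (0:ℝ) ≤ s^2 - s + 1 by nlinarith),
          mul_nonneg hκ.le (show (0:ℝ) ≤ t - t^2 by nlinarith)]
      · nlinarith [mul_nonneg hlam.le (show (0:ℝ) ≤ s - s^2 by nlinarith),
          mul_nonneg hκ.le (show (0:ℝ) ≤ 1 - t + t^2 by nlinarith)]
    have h2 : |lam*(s^2 - s) - κ*(t^2 - t)|/(4*A) ≤ (lam + κ)/(4*A) := by
      apply div_le_div_of_nonneg_right h1 (by positivity) |>.trans_eq rfl
    calc |lam*(s^2 - s) - κ*(t^2 - t)|/(4*A) ≤ (lam + κ)/(4*A) := h2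
      _ ≤ (κ + lam)/(4*A) + 1 := by rw [add_comm κ lam]; linarith
  calc |(Y - X) * ((M₁:ℝ)*((M₁:ℝ)+1)/2)
      + (L * ((M₂:ℝ) - (M₁:ℝ)) - κ * ((M₂:ℝ)*((M₂:ℝ)+1)/2 - (M₁:ℝ)*((M₁:ℝ)+1)/2))/(2*A)
      - (1/(4*A))*(1/κ - 1/lam)*L^2|
      = |(lam*(s^2 - s) - κ*(t^2 - t))/(4*A)| := by rw [key]
    _ ≤ (κ + lam)/(4*A) + 1 := habs

lemma T_est {A B X Y L : ℝ} (hA : 0 < A) (hκ : 0 < 2*A*X+B) (hXY : X ≤ Y) (hL : 0 ≤ L) :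
    |((eqReg A B X Y L).card : ℝ) - (1/(4*A))*(1/(2*A*X+B) - 1/(2*A*Y+B))*L^2|
      ≤ L/(2*A*X+B) + (((2*A*X+B) + (2*A*Y+B))/(4*A) + 1) := by
  have hcast : ((eqReg A B X Y L).card : ℝ)
      = ∑ n ∈ Finset.Icc (1:ℤ) ⌊L/(2*A*X+B)⌋, ((eqRow A B X Y L n).card : ℝ) := by
    rw [card_eqReg]; push_cast; ring
  have h1 : |((eqReg A B X Y L).card : ℝ)
      - ∑ n ∈ Finset.Icc (1:ℤ) ⌊L/(2*A*X+B)⌋, rowlen A B X Y L n|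
      ≤ L/(2*A*X+B) := by
    rw [hcast, ← Finset.sum_sub_distrib]
    refine (Finset.abs_sum_le_sum_abs _ _).trans ?_
    have h2 : ∀ n ∈ Finset.Icc (1:ℤ) ⌊L/(2*A*X+B)⌋,
        |((eqRow A B X Y L n).card : ℝ) - rowlen A B X Y L n| ≤ 1 :=
      fun n hn => rowcard_est hA hκ hXY hn
    refine (Finset.sum_le_sum h2).trans ?_
    rw [Finset.sum_const, nsmul_eq_mul, mul_one]
    rw [Int.card_Icc]
    have hM0 : 0 ≤ ⌊L/(2*A*X+B)⌋ := Int.floor_nonneg.mpr (by positivity)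
    have h5 : ((⌊L/(2*A*X+B)⌋ + 1 - 1).toNat : ℤ) = ⌊L/(2*A*X+B)⌋ :=
      (Int.toNat_of_nonneg (by omega)).trans (by ring)
    have h6 := congrArg (fun z : ℤ => (z:ℝ)) h5
    push_cast at h6
    rw [h6]
    exact Int.floor_le (L/(2*A*X+B))
  have h3 := sum_rowlen_est hA hκ hXY hL
  set SS := ∑ n ∈ Finset.Icc (1:ℤ) ⌊L/(2*A*X+B)⌋, rowlen A B X Y L n
  calc |((eqReg A B X Y L).card : ℝ) - (1/(4*A))*(1/(2*A*X+B) - 1/(2*A*Y+B))*L^2|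
      ≤ |((eqReg A B X Y L).card : ℝ) - SS|
        + |SS - (1/(4*A))*(1/(2*A*X+B) - 1/(2*A*Y+B))*L^2| := abs_sub_le _ _ _
    _ ≤ L/(2*A*X+B) + (((2*A*X+B) + (2*A*Y+B))/(4*A) + 1) := add_le_add h1 h3

lemma eqP_scale {A B X Y L : ℝ} (hA : 0 < A) {e : ℕ} (he : 1 ≤ e) (q : ℤ×ℤ) :
    eqP A B X Y L ((e:ℤ)*q.1, (e:ℤ)*q.2) ↔ eqP A B X Y (L/(e:ℝ)) q := by
  obtain ⟨m, n⟩ := q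
  unfold eqP
  simp only [Prod.fst, Prod.snd]
  have he0 : (0:ℝ) < (e:ℝ) := by exact_mod_cast he.trans_lt' (by norm_num)
  have heZ : (1:ℤ) ≤ (e:ℤ) := by exact_mod_cast he
  have h1 : (1 ≤ (e:ℤ)*n) ↔ (1 ≤ n) := by
    constructor
    · intro h
      by_contra h'
      push_neg at h'
      nlinarith
    · intro h; nlinarith
  have hc1 : (((e:ℤ)*m : ℤ) : ℝ) = (e:ℝ)*(m:ℝ) := by push_cast; ring
  have hc2 : (((e:ℤ)*n : ℤ) : ℝ) = (e:ℝ)*(n:ℝ) := by push_cast; ring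
  rw [h1, hc1, hc2]
  have h2 : (X*((e:ℝ)*n) ≤ (e:ℝ)*m) ↔ (X*(n:ℝ) ≤ (m:ℝ)) := by
    rw [show X*((e:ℝ)*n) = (e:ℝ)*(X*n) by ring]
    exact mul_le_mul_iff_right₀ he0
  have h3 : ((e:ℝ)*m ≤ Y*((e:ℝ)*n)) ↔ ((m:ℝ) ≤ Y*(n:ℝ)) := by
    rw [show Y*((e:ℝ)*n) = (e:ℝ)*(Y*n) by ring]
    exact mul_le_mul_iff_right₀ he0
  have h4 : (2*A*((e:ℝ)*m) + B*((e:ℝ)*n) ≤ L) ↔ (2*A*(m:ℝ) + B*(n:ℝ) ≤ L/(e:ℝ)) := by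
    rw [le_div_iff₀ he0]
    constructor <;> intro h <;> nlinarith
  rw [h2, h3, h4]

lemma card_dvd_filter {A B X Y L : ℝ} (hA : 0 < A) (hκ : 0 < 2*A*X+B)
    {e : ℕ} (he : 1 ≤ e) :
    ((eqReg A B X Y L).filter (fun p => (e:ℤ) ∣ p.1 ∧ (e:ℤ) ∣ p.2)).card
      = (eqReg A B X Y (L/(e:ℝ))).card := by
  symm
  apply Finset.card_bij (fun q _ => ((e:ℤ)*q.1, (e:ℤ)*q.2))
  · intro q hq
    rw [Finset.mem_filter]
    rw [mem_eqReg hA hκ] at hq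
    refine ⟨(mem_eqReg hA hκ).mpr ((eqP_scale hA he q).mpr hq), ⟨q.1, rfl⟩, ⟨q.2, rfl⟩⟩
  · intro q1 h1 q2 h2 heq
    have he0 : (e:ℤ) ≠ 0 := by positivity
    obtain ⟨ha, hb⟩ := Prod.mk.injEq _ _ _ _ ▸ heq
    exact Prod.ext (mul_left_cancel₀ he0 ha) (mul_left_cancel₀ he0 hb)
  · intro p hp
    rw [Finset.mem_filter] at hp
    obtain ⟨hpreg, ⟨m', hm'⟩, ⟨n', hn'⟩⟩ := hp
    refine ⟨(m', n'), ?_, by simp [← hm', ← hn']⟩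
    rw [mem_eqReg hA hκ]
    apply (eqP_scale hA he (m', n')).mp
    rw [mem_eqReg hA hκ] at hpreg
    simpa only [← hm', ← hn'] using hpreg

lemma S_eq {A B X Y L : ℝ} (hA : 0 < A) (hκ : 0 < 2*A*X+B) :
    ((eqCop A B X Y L).card : ℤ)
      = ∑ d ∈ Finset.Icc 1 (⌊L/(2*A*X+B)⌋.toNat),
          moebius d * ((eqReg A B X Y (L/(d:ℝ))).card : ℤ) := by
  classical
  set D : ℕ := ⌊L/(2*A*X+B)⌋.toNat with hD
  -- step 1: card as sum of indicators
  have h1 : ((eqCop A B X Y L).card : ℤ)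
      = ∑ p ∈ eqReg A B X Y L, (if Int.gcd p.1 p.2 = 1 then (1:ℤ) else 0) := by
    rw [eqCop, Finset.card_filter]
    push_cast [apply_ite (fun n : ℕ => (n:ℤ))]
    rfl
  -- step 2+3: indicator as moebius sum
  have h2 : ∀ p ∈ eqReg A B X Y L,
      (if Int.gcd p.1 p.2 = 1 then (1:ℤ) else 0)
        = ∑ e ∈ Finset.Icc 1 D, (if (e:ℤ) ∣ p.1 ∧ (e:ℤ) ∣ p.2 then moebius e else 0) := by
    intro p hp
    set g : ℕ := Int.gcd p.1 p.2 with hg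
    have hpn : 1 ≤ p.2 ∧ p.2 ≤ ⌊L/(2*A*X+B)⌋ := by
      obtain ⟨m, n⟩ := p
      simp only [eqReg, Finset.mem_biUnion, Finset.mem_map, Finset.mem_Icc,
        Function.Embedding.coeFn_mk, Prod.mk.injEq] at hp
      obtain ⟨n', hn', m', _, rfl, rfl⟩ := hp
      exact hn'
    have hg0 : g ≠ 0 := by
      rw [hg, Ne, Int.gcd_eq_zero_iff]
      rintro ⟨-, h⟩
      omega
    have hgD : g ≤ D := by
      have h3 : g ∣ p.2.natAbs := Nat.gcd_dvd_right _ _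
      have h4 : g ≤ p.2.natAbs := Nat.le_of_dvd (by omega) h3
      have h5 : p.2.natAbs ≤ D := by
        rw [hD]
        omega
      omega
    -- moebius identity
    have hmz : ∑ e ∈ g.divisors, moebius e = if g = 1 then (1:ℤ) else 0 := by
      rw [← coe_mul_zeta_apply, moebius_mul_coe_zeta, one_apply]
    have hdvd_iff : ∀ e : ℕ, (e ∣ g ↔ ((e:ℤ) ∣ p.1 ∧ (e:ℤ) ∣ p.2)) := by
      intro e
      constructor
      · intro h
        have hZ : (e:ℤ) ∣ (g:ℤ) := Int.natCast_dvd_natCast.mpr h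
        exact ⟨hZ.trans (Int.gcd_dvd_left ..), hZ.trans (Int.gcd_dvd_right ..)⟩
      · rintro ⟨ha, hb⟩
        exact Int.natCast_dvd_natCast.mp (Int.dvd_coe_gcd ha hb)
    have hsub : g.divisors ⊆ Finset.Icc 1 D := by
      intro e heD
      rw [Nat.mem_divisors] at heD
      rw [Finset.mem_Icc]
      have := Nat.le_of_dvd (by omega) heD.1
      have := Nat.pos_of_mem_divisors (Nat.mem_divisors.mpr heD)
      omega
    have hgcd1 : (Int.gcd p.1 p.2 = 1) ↔ (g = 1) := by rw [hg]
    rw [if_congr hgcd1 rfl rfl, ← hmz]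
    calc ∑ e ∈ g.divisors, moebius e
        = ∑ e ∈ g.divisors, (if e ∣ g then moebius e else 0) :=
          Finset.sum_congr rfl fun e he => (if_pos (Nat.mem_divisors.mp he).1).symm
      _ = ∑ e ∈ Finset.Icc 1 D, (if e ∣ g then moebius e else 0) :=
          Finset.sum_subset hsub fun e heI heg =>
            if_neg fun hd => heg (Nat.mem_divisors.mpr ⟨hd, hg0⟩)
      _ = ∑ e ∈ Finset.Icc 1 D, (if (e:ℤ) ∣ p.1 ∧ (e:ℤ) ∣ p.2 then moebius e else 0) :=
          Finset.sum_congr rfl fun e _ => if_congr (hdvd_iff e) rfl rfl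
  rw [h1, Finset.sum_congr rfl h2, Finset.sum_comm]
  apply Finset.sum_congr rfl
  intro e he
  rw [Finset.mem_Icc] at he
  rw [← Finset.sum_filter, Finset.sum_const, card_dvd_filter hA hκ he.1, nsmul_eq_mul]
  ring

lemma harmonic_le (D : ℕ) : ∑ d ∈ Finset.Icc 1 D, (1:ℝ)/d ≤ 1 + Real.log D := by
  induction D with
  | zero => simp
  | succ k ih =>
    rcases Nat.eq_zero_or_pos k with rfl | hk
    · norm_num
    · have hins : Finset.Icc 1 (k+1) = insert (k+1) (Finset.Icc 1 k) := by
        ext x; simp only [Finset.mem_Icc, Finset.mem_insert]; omega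
      rw [hins, Finset.sum_insert (by simp)]
      have hlog : (1:ℝ)/(k+1) ≤ Real.log (k+1) - Real.log k := by
        have hk0 : (0:ℝ) < k := by exact_mod_cast hk
        have hk1 : (0:ℝ) < (k:ℝ)+1 := by positivity
        have h1 : Real.log ((k:ℝ)/(k+1)) ≤ (k:ℝ)/(k+1) - 1 :=
          Real.log_le_sub_one_of_pos (by positivity)
        rw [Real.log_div (ne_of_gt hk0) (ne_of_gt hk1)] at h1
        have h2 : (k:ℝ)/(k+1) - 1 = -(1/(k+1)) := by field_simp; ring
        rw [h2] at h1
        linarith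
      have hcast : ((k+1:ℕ):ℝ) = (k:ℝ)+1 := by push_cast; ring
      rw [hcast]
      linarith

lemma count_est {A B X Y : ℝ} (hA : 0 < A) (hκ : 0 < 2*A*X+B) (hXY : X ≤ Y)
    {ε : ℝ} (hε : 0 < ε) :
    ∃ C : ℝ, 0 < C ∧ ∀ L : ℝ, 1 ≤ L → 2*(2*A*X+B) ≤ L →
      |((eqCop A B X Y L).card : ℝ)
        - (6/π^2)*((1/(4*A))*(1/(2*A*X+B) - 1/(2*A*Y+B)))*L^2|
        ≤ C * L^((1:ℝ)+2*ε) := by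
  set κ : ℝ := 2*A*X+B with hκdef
  set lam : ℝ := 2*A*Y+B with hlamdef
  have hlam : 0 < lam := by rw [hlamdef]; nlinarith
  have hκlam : κ ≤ lam := by rw [hκdef, hlamdef]; nlinarith
  set K : ℝ := (κ + lam)/(4*A) + 1 with hK
  have hK0 : 0 < K := by rw [hK]; positivity
  set α : ℝ := (1/(4*A))*(1/κ - 1/lam) with hα
  have hα0 : 0 ≤ α := by
    rw [hα]
    have : 1/lam ≤ 1/κ := one_div_le_one_div_of_le hκ hκlam
    have h4 : (0:ℝ) < 1/(4*A) := by positivity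
    nlinarith
  obtain ⟨cκ, hcκ1, hcκκ⟩ : ∃ c : ℝ, 1 ≤ c ∧ 1/κ ≤ c :=
    ⟨max 1 (1/κ), le_max_left _ _, le_max_right _ _⟩
  refine ⟨(1/κ)*(1+K) + 2*α*κ + (1/(2*ε))*cκ^((1:ℝ)+2*ε), ?_, ?_⟩
  · have h1 : 0 < (1/κ)*(1+K) := by positivity
    have h2 : 0 ≤ 2*α*κ := by positivity
    have h3 : 0 < (1/(2*ε))*cκ^((1:ℝ)+2*ε) := by
      have hc0 : 0 < cκ := lt_of_lt_of_le one_pos hcκ1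
      positivity
    exact add_pos (add_pos_of_pos_of_nonneg h1 h2) h3
  intro L hL1 hL2κ
  have hL0 : 0 < L := lt_of_lt_of_le one_pos hL1
  set D : ℕ := ⌊L/κ⌋.toNat with hDdef
  have hLκ2 : 2 ≤ L/κ := by rw [le_div_iff₀ hκ]; linarith
  have hD1 : 1 ≤ D := by
    have : (1:ℤ) ≤ ⌊L/κ⌋ := Int.le_floor.mpr (by push_cast; linarith)
    omega
  have hDle : (D:ℝ) ≤ L/κ := by
    have h1 : ((⌊L/κ⌋.toNat : ℤ):ℝ) ≤ L/κ := by
      rw [Int.toNat_of_nonneg (Int.floor_nonneg.mpr (by positivity))]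
      exact Int.floor_le _
    exact_mod_cast h1
  have hDge : L/(2*κ) ≤ (D:ℝ) := by
    have h1 : L/κ - 1 < (⌊L/κ⌋:ℝ) := Int.sub_one_lt_floor _
    have h2' : ((⌊L/κ⌋.toNat:ℕ):ℤ) = ⌊L/κ⌋ :=
      Int.toNat_of_nonneg (Int.floor_nonneg.mpr (by positivity))
    have h2 : ((⌊L/κ⌋:ℤ):ℝ) = ((D:ℕ):ℝ) := by
      rw [hDdef]; exact_mod_cast (congrArg (fun z : ℤ => (z:ℝ)) h2').symm
    have h3 : L/(2*κ) ≤ L/κ - 1 := by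
      have heq : L/(2*κ) = (L/κ)/2 := by rw [div_div, mul_comm]
      rw [heq]
      linarith
    linarith [h2 ▸ h1]
  have hD0 : (0:ℝ) < D := lt_of_lt_of_le (by positivity) hDge
  -- the exact identity
  have hSR : ((eqCop A B X Y L).card : ℝ)
      = ∑ d ∈ Finset.Icc 1 D, (moebius d : ℝ) * ((eqReg A B X Y (L/(d:ℝ))).card : ℝ) := by
    have := S_eq (A := A) (B := B) (X := X) (Y := Y) (L := L) hA hκ
    exact_mod_cast this
  have hdecomp : ((eqCop A B X Y L).card : ℝ) - (6/π^2)*α*L^2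
      = (∑ d ∈ Finset.Icc 1 D, (moebius d : ℝ)
          * (((eqReg A B X Y (L/(d:ℝ))).card : ℝ) - α*(L/(d:ℝ))^2))
        + α*L^2 * ((∑ d ∈ Finset.Icc 1 D, (moebius d : ℝ)/(d:ℝ)^2) - 6/π^2) := by
    rw [hSR]
    have hterm : ∀ d ∈ Finset.Icc 1 D,
        (moebius d : ℝ) * ((eqReg A B X Y (L/(d:ℝ))).card : ℝ)
        = (moebius d : ℝ) * (((eqReg A B X Y (L/(d:ℝ))).card : ℝ) - α*(L/(d:ℝ))^2)
          + α*L^2 * ((moebius d : ℝ)/(d:ℝ)^2) := by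
      intro d hd
      have hd1 : 1 ≤ d := (Finset.mem_Icc.mp hd).1
      have hd0 : ((d:ℕ):ℝ) ≠ 0 := by positivity
      field_simp
      ring
    rw [Finset.sum_congr rfl hterm, Finset.sum_add_distrib, ← Finset.mul_sum,
      Finset.mul_sum]
    rw [← Finset.mul_sum]
    ring
  -- bound E1
  have hE1 : |∑ d ∈ Finset.Icc 1 D, (moebius d : ℝ)
        * (((eqReg A B X Y (L/(d:ℝ))).card : ℝ) - α*(L/(d:ℝ))^2)|
      ≤ (L/κ) * (∑ d ∈ Finset.Icc 1 D, (1:ℝ)/d) + K * D := by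
    refine (Finset.abs_sum_le_sum_abs _ _).trans ?_
    have hperm : ∀ d ∈ Finset.Icc 1 D,
        |(moebius d : ℝ) * (((eqReg A B X Y (L/(d:ℝ))).card : ℝ) - α*(L/(d:ℝ))^2)|
        ≤ (L/κ)*(1/(d:ℝ)) + K := by
      intro d hd
      have hd1 : 1 ≤ d := (Finset.mem_Icc.mp hd).1
      have hd0 : (0:ℝ) < (d:ℝ) := by exact_mod_cast hd1.trans_lt' (by norm_num)
      have hmu : |(moebius d : ℝ)| ≤ 1 := by
        exact_mod_cast abs_moebius_le_one (n := d)
      have hT := T_est (A := A) (B := B) (X := X) (Y := Y) (L := L/(d:ℝ))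
        hA hκ hXY (by positivity)
      rw [abs_mul]
      have hTval : |((eqReg A B X Y (L/(d:ℝ))).card : ℝ) - α*(L/(d:ℝ))^2|
          ≤ (L/κ)*(1/(d:ℝ)) + K := by
        have heq : (L/(d:ℝ))/κ = (L/κ)*(1/(d:ℝ)) := by ring
        rw [hα]
        calc |((eqReg A B X Y (L/(d:ℝ))).card : ℝ)
            - (1/(4*A))*(1/κ - 1/lam)*(L/(d:ℝ))^2|
            ≤ (L/(d:ℝ))/κ + ((κ + lam)/(4*A) + 1) := hT
          _ = (L/κ)*(1/(d:ℝ)) + K := by rw [heq, hK]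
      calc |(moebius d : ℝ)| * |((eqReg A B X Y (L/(d:ℝ))).card : ℝ) - α*(L/(d:ℝ))^2|
          ≤ 1 * ((L/κ)*(1/(d:ℝ)) + K) := by
            apply mul_le_mul hmu hTval (abs_nonneg _) zero_le_one
        _ = (L/κ)*(1/(d:ℝ)) + K := one_mul _
    refine (Finset.sum_le_sum hperm).trans ?_
    rw [Finset.sum_add_distrib, Finset.sum_const, ← Finset.mul_sum, Nat.card_Icc,
      nsmul_eq_mul]
    simp only [Nat.add_sub_cancel]
    apply le_of_eq
    ring
  -- bound E2
  have hE2 : |α*L^2 * ((∑ d ∈ Finset.Icc 1 D, (moebius d : ℝ)/(d:ℝ)^2) - 6/π^2)|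
      ≤ 2*α*κ*L := by
    rw [abs_mul]
    have h1 : |α*L^2| = α*L^2 := abs_of_nonneg (by positivity)
    have h2 := moebius_partial D hD1
    have h3 : (1:ℝ)/D ≤ 2*κ/L := by
      rw [div_le_div_iff₀ hD0 hL0]
      calc 1*L = L := one_mul L
        _ ≤ 2*κ*(D:ℝ) := by
            rw [div_le_iff₀ (by positivity : (0:ℝ) < 2*κ)] at hDge
            linarith
    calc |α*L^2| * |(∑ d ∈ Finset.Icc 1 D, (moebius d : ℝ)/(d:ℝ)^2) - 6/π^2|
        ≤ (α*L^2) * (2*κ/L) := by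
          rw [h1]
          apply mul_le_mul_of_nonneg_left (h2.trans h3) (by positivity)
      _ = 2*α*κ*L := by field_simp
  -- harmonic and rpow bounds
  have hharm : ∑ d ∈ Finset.Icc 1 D, (1:ℝ)/d ≤ 1 + (L/κ)^(2*ε)/(2*ε) := by
    refine (harmonic_le D).trans ?_
    have h1 : Real.log D ≤ (D:ℝ)^(2*ε)/(2*ε) := Real.log_le_rpow_div (by positivity) (by positivity)
    have h2 : (D:ℝ)^(2*ε) ≤ (L/κ)^(2*ε) :=
      Real.rpow_le_rpow (by positivity) hDle (by positivity)
    have h3 : (D:ℝ)^(2*ε)/(2*ε) ≤ (L/κ)^(2*ε)/(2*ε) := by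
      apply div_le_div_of_nonneg_right h2 (by positivity) |>.trans_eq rfl
    linarith
  -- assemble
  have htotal : |((eqCop A B X Y L).card : ℝ) - (6/π^2)*α*L^2|
      ≤ (L/κ)*(1 + (L/κ)^(2*ε)/(2*ε)) + K*(L/κ) + 2*α*κ*L := by
    rw [hdecomp]
    refine (abs_add_le _ _).trans ?_
    have hKD : K * (D:ℝ) ≤ K * (L/κ) := by
      apply mul_le_mul_of_nonneg_left hDle hK0.le
    have hLκ0 : (0:ℝ) ≤ L/κ := by positivity
    have hmulharm : (L/κ) * (∑ d ∈ Finset.Icc 1 D, (1:ℝ)/d)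
        ≤ (L/κ)*(1 + (L/κ)^(2*ε)/(2*ε)) := mul_le_mul_of_nonneg_left hharm hLκ0
    have := add_le_add (hE1.trans (add_le_add hmulharm hKD)) hE2
    linarith
  -- convert to C * L^(1+2ε)
  have hLrp : L ≤ L^((1:ℝ)+2*ε) := by
    calc L = L^((1:ℝ)) := (Real.rpow_one L).symm
      _ ≤ L^((1:ℝ)+2*ε) := Real.rpow_le_rpow_of_exponent_le hL1 (by linarith)
  have hrp1 : (L/κ)^((1:ℝ)+2*ε) ≤ cκ^((1:ℝ)+2*ε) * L^((1:ℝ)+2*ε) := by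
    have h1 : L/κ = cκ*L*(1/(cκ*L))*(L/κ) := by
      field_simp
    have h2 : L/κ ≤ cκ*L := by
      calc L/κ = (1/κ)*L := by ring
        _ ≤ cκ*L := mul_le_mul_of_nonneg_right hcκκ hL0.le
    calc (L/κ)^((1:ℝ)+2*ε) ≤ (cκ*L)^((1:ℝ)+2*ε) :=
          Real.rpow_le_rpow (by positivity) h2 (by positivity)
      _ = cκ^((1:ℝ)+2*ε) * L^((1:ℝ)+2*ε) :=
          Real.mul_rpow (by positivity) hL0.le
  have hsplitrp : (L/κ)*((L/κ)^(2*ε)) = (L/κ)^((1:ℝ)+2*ε) := by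
    rw [Real.rpow_add (by positivity) 1 (2*ε), Real.rpow_one]
  refine htotal.trans ?_
  have expand : (L/κ)*(1 + (L/κ)^(2*ε)/(2*ε)) + K*(L/κ) + 2*α*κ*L
      = (1/κ)*(1+K)*L + 2*α*κ*L + (1/(2*ε))*((L/κ)*((L/κ)^(2*ε))) := by
    field_simp
    ring
  rw [expand, hsplitrp]
  have hb1 : (1/κ)*(1+K)*L ≤ (1/κ)*(1+K)*L^((1:ℝ)+2*ε) :=
    mul_le_mul_of_nonneg_left hLrp (by positivity)
  have hb2 : 2*α*κ*L ≤ 2*α*κ*L^((1:ℝ)+2*ε) :=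
    mul_le_mul_of_nonneg_left hLrp (by positivity)
  have hb3 : (1/(2*ε))*((L/κ)^((1:ℝ)+2*ε))
      ≤ (1/(2*ε))*(cκ^((1:ℝ)+2*ε) * L^((1:ℝ)+2*ε)) :=
    mul_le_mul_of_nonneg_left hrp1 (by positivity)
  have final : ((1/κ)*(1+K) + 2*α*κ + (1/(2*ε))*cκ^((1:ℝ)+2*ε)) * L^((1:ℝ)+2*ε)
      = (1/κ)*(1+K)*L^((1:ℝ)+2*ε) + 2*α*κ*L^((1:ℝ)+2*ε)
        + (1/(2*ε))*(cκ^((1:ℝ)+2*ε) * L^((1:ℝ)+2*ε)) := by ring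
  rw [final]
  exact add_le_add (add_le_add hb1 hb2) hb3

set_option maxHeartbeats 1600000 in
/-- For `A > 0`, `B² - 4AC = 0`, and `[X,Y] ⊆ (-B/(2A), ∞)`, the number of coprime
pairs `(m,n)`, `n ≥ 1`, with `X ≤ m/n ≤ Y` and `0 < Am² + Bmn + Cn² ≤ Δ` is
`(3Δ/π²)(-2/(2AY+B) + 2/(2AX+B)) + O(Δ^{1/2+ε})`. -/
theorem equid_count_A_pos_D_zero (A B C X Y : ℝ) (hA : 0 < A)
    (hD : B ^ 2 - 4 * A * C = 0) (hX : -B / (2 * A) < X) (hXY : X ≤ Y)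
    (ε : ℝ) (hε : 0 < ε) :
    ∃ c : ℝ, 0 < c ∧ ∃ Δ₀ : ℝ, ∀ Δ : ℝ, Δ₀ ≤ Δ →
      abs (({p : ℤ × ℤ | 1 ≤ p.2 ∧ Int.gcd p.1 p.2 = 1 ∧
            X ≤ (p.1 : ℝ) / (p.2 : ℝ) ∧ (p.1 : ℝ) / (p.2 : ℝ) ≤ Y ∧
            0 < A * (p.1 : ℝ) ^ 2 + B * (p.1 : ℝ) * (p.2 : ℝ) + C * (p.2 : ℝ) ^ 2 ∧
            A * (p.1 : ℝ) ^ 2 + B * (p.1 : ℝ) * (p.2 : ℝ) + C * (p.2 : ℝ) ^ 2 ≤ Δ}.ncard : ℝ) -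
          3 * Δ / π ^ 2 * (-2 / (2 * A * Y + B) + 2 / (2 * A * X + B))) ≤
        c * Δ ^ ((1 : ℝ) / 2 + ε) := by
  have hκ : 0 < 2*A*X+B := by
    rw [div_lt_iff₀ (by positivity)] at hX
    nlinarith
  have hlam : 0 < 2*A*Y+B := by nlinarith
  have hCval : C = B^2/(4*A) := by
    field_simp
    nlinarith [hD]
  obtain ⟨C₀, hC₀, hbound⟩ := count_est (B := B) hA hκ hXY hε
  set c : ℝ := C₀ * (2*Real.sqrt A)^((1:ℝ)+2*ε) with hc
  have hc0 : 0 < c := by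
    apply mul_pos hC₀
    apply Real.rpow_pos_of_pos
    have : 0 < Real.sqrt A := Real.sqrt_pos.mpr hA
    linarith
  refine ⟨c, hc0, max 1 ((1 + 2*(2*A*X+B))^2/A), ?_⟩
  intro Δ hΔ
  have hΔ1 : (1:ℝ) ≤ Δ := le_trans (le_max_left _ _) hΔ
  have hΔ0 : (0:ℝ) < Δ := lt_of_lt_of_le one_pos hΔ1
  set L : ℝ := 2*Real.sqrt (A*Δ) with hLdef
  have hL0 : 0 ≤ L := by positivity
  have hL2 : L^2 = 4*(A*Δ) := by
    rw [hLdef, mul_pow, Real.sq_sqrt (by positivity)]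
    ring
  have hLbig : 1 + 2*(2*A*X+B) ≤ Real.sqrt (A*Δ) := by
    have h1 : (1 + 2*(2*A*X+B))^2/A ≤ Δ := le_trans (le_max_right _ _) hΔ
    have h2 : (1 + 2*(2*A*X+B))^2 ≤ A*Δ := by
      rw [div_le_iff₀ hA] at h1
      linarith
    calc 1 + 2*(2*A*X+B) = Real.sqrt ((1 + 2*(2*A*X+B))^2) :=
          (Real.sqrt_sq (by positivity)).symm
      _ ≤ Real.sqrt (A*Δ) := Real.sqrt_le_sqrt h2
  have hL1 : 1 ≤ L := by rw [hLdef]; nlinarith [hLbig]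
  have hL2κ : 2*(2*A*X+B) ≤ L := by rw [hLdef]; nlinarith [hLbig]
  -- set identification
  have hQform : ∀ m n : ℝ, A*m^2 + B*m*n + C*n^2 = (2*A*m + B*n)^2/(4*A) := by
    intro m n
    rw [hCval]
    field_simp
    ring
  have hseteq : {p : ℤ × ℤ | 1 ≤ p.2 ∧ Int.gcd p.1 p.2 = 1 ∧
            X ≤ (p.1 : ℝ) / (p.2 : ℝ) ∧ (p.1 : ℝ) / (p.2 : ℝ) ≤ Y ∧
            0 < A * (p.1 : ℝ) ^ 2 + B * (p.1 : ℝ) * (p.2 : ℝ) + C * (p.2 : ℝ) ^ 2 ∧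
            A * (p.1 : ℝ) ^ 2 + B * (p.1 : ℝ) * (p.2 : ℝ) + C * (p.2 : ℝ) ^ 2 ≤ Δ}
      = ↑(eqCop A B X Y L) := by
    ext ⟨m, n⟩
    simp only [Set.mem_setOf_eq, Finset.coe_filter, eqCop, Finset.mem_coe,
      Finset.mem_filter, mem_eqReg hA hκ, eqP]
    constructor
    · rintro ⟨hn, hg, hx, hy, hq0, hqΔ⟩
      have hn0 : (0:ℝ) < (n:ℝ) := by exact_mod_cast hn.trans_lt' (by norm_num)
      have hxn : X*(n:ℝ) ≤ (m:ℝ) := by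
        rw [le_div_iff₀ hn0] at hx
        linarith
      have hyn : (m:ℝ) ≤ Y*(n:ℝ) := by
        rw [div_le_iff₀ hn0] at hy
        linarith
      have hu0 : 0 < 2*A*(m:ℝ) + B*(n:ℝ) := by nlinarith
      have hq := hqΔ
      rw [hQform] at hq
      rw [div_le_iff₀ (by positivity)] at hq
      have husq : (2*A*(m:ℝ) + B*(n:ℝ))^2 ≤ L^2 := by linarith [hL2]
      have huL : 2*A*(m:ℝ) + B*(n:ℝ) ≤ L := by
        calc 2*A*(m:ℝ) + B*(n:ℝ)
            = Real.sqrt ((2*A*(m:ℝ) + B*(n:ℝ))^2) := (Real.sqrt_sq hu0.le).symm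
          _ ≤ Real.sqrt (L^2) := Real.sqrt_le_sqrt husq
          _ = L := Real.sqrt_sq hL0
      exact ⟨⟨hn, hxn, hyn, huL⟩, hg⟩
    · rintro ⟨⟨hn, hxn, hyn, huL⟩, hg⟩
      have hn0 : (0:ℝ) < (n:ℝ) := by exact_mod_cast hn.trans_lt' (by norm_num)
      have hu0 : 0 < 2*A*(m:ℝ) + B*(n:ℝ) := by nlinarith
      have hq0 : 0 < A*(m:ℝ)^2 + B*(m:ℝ)*(n:ℝ) + C*(n:ℝ)^2 := by
        rw [hQform]; positivity
      refine ⟨hn, hg, ?_, ?_, hq0, ?_⟩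
      · rw [le_div_iff₀ hn0]; linarith
      · rw [div_le_iff₀ hn0]; linarith
      · rw [hQform, div_le_iff₀ (by positivity)]
        have husq : (2*A*(m:ℝ) + B*(n:ℝ))^2 ≤ L^2 := by
          nlinarith [mul_nonneg (sub_nonneg.mpr huL)
            (by linarith : (0:ℝ) ≤ L + (2*A*(m:ℝ) + B*(n:ℝ)))]
        linarith [hL2]
  rw [hseteq, Set.ncard_coe_finset]
  -- main term match
  have hmain : (6/π^2)*((1/(4*A))*(1/(2*A*X+B) - 1/(2*A*Y+B)))*L^2
      = 3 * Δ / π ^ 2 * (-2 / (2 * A * Y + B) + 2 / (2 * A * X + B)) := by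
    rw [hL2]
    have hπ : (π:ℝ) ≠ 0 := Real.pi_ne_zero
    field_simp
    ring
  rw [← hmain]
  -- error term match
  have herr : C₀ * L^((1:ℝ)+2*ε) = c * Δ ^ ((1:ℝ)/2 + ε) := by
    rw [hc, hLdef]
    have h1 : Real.sqrt (A*Δ) = Real.sqrt A * Real.sqrt Δ := Real.sqrt_mul hA.le Δ
    rw [h1, show (2:ℝ)*(Real.sqrt A * Real.sqrt Δ) = (2*Real.sqrt A) * Real.sqrt Δ by ring]
    rw [Real.mul_rpow (by positivity) (Real.sqrt_nonneg Δ)]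
    have h2 : Real.sqrt Δ ^ ((1:ℝ)+2*ε) = Δ ^ ((1:ℝ)/2 + ε) := by
      rw [Real.sqrt_eq_rpow, ← Real.rpow_mul hΔ0.le]
      congr 1
      ring
    rw [h2]
    ring
  rw [← herr]
  exact hbound L hL1 hL2κ
end
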